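/- If v is a vertex of degree at most 4 in a finite simple graph G, then A(G) > A(G − v). -/

import Mathlib

open Finset

/-- A partition of the vertex set of `G` into independent (stable) sets. -/
def IsStablePartition {V : Type*} [Fintype V] [DecidableEq V] (G : SimpleGraph V)
    (P : Finpartition (Finset.univ : Finset V)) : Prop :=
  ∀ p ∈ P.parts, ∀ u ∈ p, ∀ v ∈ p, ¬ G.Adj u v

/-- `colS G k` : number of non-equivalent colorings of `G` with exactly `k` colors. -/
noncomputable def colS {V : Type*} [Fintype V] [DecidableEq V] (G : SimpleGraph V) (k : ℕ) : ℕ :=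
  Set.ncard {P : Finpartition (Finset.univ : Finset V) |
    IsStablePartition G P ∧ P.parts.card = k}

/-- `colB G` : total number of non-equivalent colorings of `G`. -/
noncomputable def colB {V : Type*} [Fintype V] [DecidableEq V] (G : SimpleGraph V) : ℕ :=
  ∑ k ∈ Finset.range (Fintype.card V + 1), colS G k

/-- `colT G` : total number of color classes over all non-equivalent colorings of `G`. -/
noncomputable def colT {V : Type*} [Fintype V] [DecidableEq V] (G : SimpleGraph V) : ℕ :=
  ∑ k ∈ Finset.range (Fintype.card V + 1), k * colS G k

/-- `colA G` : average number of colors in the non-equivalent colorings of `G`. -/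
noncomputable def colA {V : Type*} [Fintype V] [DecidableEq V] (G : SimpleGraph V) : ℚ :=
  (colT G : ℚ) / (colB G : ℚ)

/-- Disjoint union of two graphs. -/
def graphUnion {V W : Type*} (G : SimpleGraph V) (H : SimpleGraph W) : SimpleGraph (V ⊕ W) where
  Adj a b := match a, b with
    | Sum.inl x, Sum.inl y => G.Adj x y
    | Sum.inr x, Sum.inr y => H.Adj x y
    | _, _ => False
  symm := by constructor; rintro (x|x) (y|y) h <;> first | exact h.symm | exact h.elim
  loopless := by constructor; rintro (x|x) h <;> first | exact G.loopless.irrefl x h | exact H.loopless.irrefl x h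

/-- Join of two graphs: disjoint union plus all cross edges. -/
def graphJoin {V W : Type*} (G : SimpleGraph V) (H : SimpleGraph W) : SimpleGraph (V ⊕ W) where
  Adj a b := match a, b with
    | Sum.inl x, Sum.inl y => G.Adj x y
    | Sum.inr x, Sum.inr y => H.Adj x y
    | _, _ => True
  symm := by constructor; rintro (x|x) (y|y) h <;> first | exact h.symm | trivial
  loopless := by constructor; rintro (x|x) h <;> first | exact G.loopless.irrefl x h | exact H.loopless.irrefl x h

/-- Deletion of a vertex. -/
def deleteVertex {V : Type*} (G : SimpleGraph V) (v : V) : SimpleGraph {x : V // x ≠ v} :=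
  G.induce {x : V | x ≠ v}

/-!
A stable partition `P` of `G` is determined by its restriction `Q` to `V - v` together with the
block `(P.part v).erase v`, which is either `∅` (`v` is a singleton block) or one of the `a(Q)`
blocks of `Q` containing no neighbour of `v`. Writing `k(Q)` for the number of blocks of `Q` and
summing over the stable partitions `Q` of `V - v`,
`B(G - v) = Σ 1`, `T(G - v) = Σ k`, `B(G) = Σ (1 + a)`, `T(G) = Σ (k + 1 + a k)`,
where `b = k - a` counts blocks meeting the neighbourhood of `v`, so `0 ≤ b ≤ deg v ≤ 4`.
With `c = k + a`, one has the identity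
`8 (T(G) B(G - v) - T(G - v) B(G))
  = Σ_{Q, Q'} (c_Q - c_Q')² + 2 (Σ (2 - b))² + 2 B(G - v) Σ b (4 - b)`.
If the right side vanished, `b` would only take the values `0` and `4`, both attained, with `c`
constant; then two partitions would have `k` differing by exactly `2`. Splitting a block shows that
every intermediate number of blocks also occurs, and such a partition would have `b = 2`.
-/

namespace Finpartition

section Erase

variable {α : Type*} [DecidableEq α] {s : Finset α} {v : α}

def erase (P : Finpartition s) (v : α) : Finpartition (s.erase v) :=
  (P.avoid {v}).copy (sdiff_singleton_eq_erase v s)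

lemma mem_erase_parts {P : Finpartition s} {c : Finset α} :
    c ∈ (P.erase v).parts ↔ ∃ d ∈ P.parts, ¬ d ⊆ {v} ∧ d.erase v = c := by
  simp only [erase, copy_parts, mem_avoid, sdiff_singleton_eq_erase]

lemma notMem_of_mem_parts_erase {Q : Finpartition (s.erase v)} {p : Finset α}
    (hp : p ∈ Q.parts) : v ∉ p :=
  fun h => (mem_erase.1 (Q.le hp h)).1 rfl

lemma sup_sup_erase_parts (Q : Finpartition s) {p : Finset α}
    (hp : p ∈ insert ∅ Q.parts) : p ⊔ (Q.parts.erase p).sup id = s := by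
  rcases mem_insert.1 hp with rfl | hp
  · rw [erase_eq_of_notMem Q.empty_notMem_parts, bot_eq_empty.symm, bot_sup_eq, Q.sup_parts]
  · exact (sup_insert (f := id)).symm.trans (by rw [insert_erase hp, Q.sup_parts])

/-- Insert `v` into the block `p` of `Q`; for `p = ∅` this adds the new block `{v}`. -/
def insertInto (Q : Finpartition (s.erase v)) (hv : v ∈ s) (p : Finset α)
    (hp : p ∈ insert ∅ Q.parts) : Finpartition s where
  parts := insert (insert v p) (Q.parts.erase p)
  supIndep := by
    rw [supIndep_iff_pairwiseDisjoint, coe_insert, Set.pairwiseDisjoint_insert]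
    refine ⟨Q.disjoint.subset (coe_subset.2 (erase_subset _ _)), fun q hq _ => ?_⟩
    obtain ⟨hqp, hq⟩ := mem_erase.1 hq
    refine disjoint_insert_left.2 ⟨notMem_of_mem_parts_erase hq, ?_⟩
    rcases mem_insert.1 hp with rfl | hp
    · exact disjoint_empty_left q
    · exact Q.disjoint hp hq (Ne.symm hqp)
  sup_parts := by
    rw [sup_insert, id_eq, sup_eq_union, insert_union, ← sup_eq_union,
      Q.sup_sup_erase_parts hp, insert_erase hv]
  bot_notMem h := by
    rcases mem_insert.1 h with h | h
    · exact insert_ne_empty v p h.symm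
    · exact Q.bot_notMem (mem_of_mem_erase h)

variable {Q : Finpartition (s.erase v)} {hv : v ∈ s} {p : Finset α}
  {hp : p ∈ insert ∅ Q.parts}

lemma parts_insertInto : (Q.insertInto hv p hp).parts = insert (insert v p) (Q.parts.erase p) :=
  rfl

lemma notMem_of_mem_insert_empty_parts (hp : p ∈ insert ∅ Q.parts) : v ∉ p := by
  rcases mem_insert.1 hp with rfl | hp
  · exact notMem_empty v
  · exact notMem_of_mem_parts_erase hp

lemma card_parts_insertInto :
    #(Q.insertInto hv p hp).parts = #Q.parts + if p = ∅ then 1 else 0 := by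
  rw [parts_insertInto, card_insert_of_notMem fun h =>
    notMem_of_mem_parts_erase (mem_of_mem_erase h) (mem_insert_self v p)]
  rcases mem_insert.1 hp with rfl | hp
  · rw [erase_eq_of_notMem Q.empty_notMem_parts, if_pos rfl]
  · rw [card_erase_add_one hp, if_neg (Q.ne_empty hp), add_zero]

lemma part_insertInto : (Q.insertInto hv p hp).part v = insert v p :=
  (Q.insertInto hv p hp).part_eq_of_mem (mem_insert_self _ _) (mem_insert_self v p)

lemma erase_insertInto : (Q.insertInto hv p hp).erase v = Q := by
  have hvp := notMem_of_mem_insert_empty_parts hp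
  ext c
  rw [mem_erase_parts, parts_insertInto]
  constructor
  · rintro ⟨d, hd, hdv, rfl⟩
    rcases mem_insert.1 hd with rfl | hd
    · rw [erase_insert hvp]
      refine (mem_insert.1 hp).resolve_left fun hp0 => hdv ?_
      rw [hp0, insert_empty_eq]
    · rw [erase_eq_of_notMem (notMem_of_mem_parts_erase (mem_of_mem_erase hd))]
      exact mem_of_mem_erase hd
  · intro hc
    have hcv : ¬ c ⊆ {v} := fun h => by
      obtain ⟨x, hx⟩ := Q.nonempty_of_mem_parts hc
      exact notMem_of_mem_parts_erase hc (mem_singleton.1 (h hx) ▸ hx)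
    by_cases hcp : c = p
    · subst hcp
      exact ⟨insert v c, mem_insert_self _ _, fun h => hcv ((subset_insert v c).trans h),
        erase_insert hvp⟩
    · exact ⟨c, mem_insert_of_mem (mem_erase.2 ⟨hcp, hc⟩), hcv,
        erase_eq_of_notMem (notMem_of_mem_parts_erase hc)⟩

lemma erase_part_mem_insert_empty_parts (P : Finpartition s) (v : α) :
    (P.part v).erase v ∈ insert ∅ (P.erase v).parts := by
  by_cases h : (P.part v).erase v = ∅
  · rw [h]
    exact mem_insert_self _ _
  have hv : v ∈ s :=
    P.part_nonempty.1 (nonempty_of_ne_empty fun h' => h (by rw [h', erase_empty]))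
  refine mem_insert_of_mem
    (mem_erase_parts.2 ⟨P.part v, P.part_mem.2 hv, fun hsub => h ?_, rfl⟩)
  exact (erase_eq_empty_iff _ _).2 (subset_singleton_iff.1 hsub)

lemma insertInto_erase (P : Finpartition s) (hv : v ∈ s) :
    (P.erase v).insertInto hv _ (P.erase_part_mem_insert_empty_parts v) = P := by
  have hvP : v ∈ P.part v := P.mem_part_self.2 hv
  have hP : P.part v ∈ P.parts := P.part_mem.2 hv
  ext c
  rw [parts_insertInto, insert_erase hvP, mem_insert, mem_erase, mem_erase_parts]
  constructor
  · rintro (rfl | ⟨hc, d, hd, -, rfl⟩)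
    · exact hP
    · by_cases hvd : v ∈ d
      · exact absurd (by rw [P.part_eq_of_mem hd hvd]) hc
      · rwa [erase_eq_of_notMem hvd]
  · intro hc
    by_cases hvc : v ∈ c
    · exact Or.inl (P.part_eq_of_mem hc hvc).symm
    obtain ⟨x, hx⟩ := P.nonempty_of_mem_parts hc
    refine Or.inr ⟨fun h => hvc ?_, c, hc, fun hsub => hvc (mem_singleton.1 (hsub hx) ▸ hx),
      erase_eq_of_notMem hvc⟩
    rw [← P.eq_of_mem_parts hP hc (mem_of_mem_erase (h ▸ hx)) hx]
    exact hvP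

end Erase

section FinsetMap

variable {α β : Type*} [DecidableEq α] [DecidableEq β] (f : α ↪ β) {s : Finset α}

def finsetMap (P : Finpartition s) : Finpartition (s.map f) where
  parts := P.parts.image (Finset.map f)
  supIndep := by
    rw [supIndep_iff_pairwiseDisjoint, coe_image, (map_injective f).injOn.pairwiseDisjoint_image]
    exact P.pairwiseDisjoint_apply (fun _ _ => map_inter _ _) (map_empty f)
  sup_parts := by
    rw [sup_image, Function.id_comp]
    exact P.sup_parts_apply (fun _ _ => map_union _ _) (map_empty f)
  bot_notMem h := by
    obtain ⟨p, hp, hp0⟩ := mem_image.1 h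
    exact P.ne_empty hp (map_eq_empty.1 hp0)

lemma parts_finsetMap (P : Finpartition s) :
    (P.finsetMap f).parts = P.parts.image (Finset.map f) :=
  rfl

lemma card_parts_finsetMap (P : Finpartition s) : #(P.finsetMap f).parts = #P.parts :=
  card_image_of_injective _ (map_injective f)

lemma finsetMap_injective : Function.Injective (finsetMap f : Finpartition s → _) :=
  fun _ _ h => Finpartition.ext (image_injective (map_injective f) (congrArg parts h))

lemma finsetMap_surjective : Function.Surjective (finsetMap f : Finpartition s → _) := by
  intro Q
  have hpre : ∀ q ∈ Q.parts, (q.preimage f f.injective.injOn).map f = q := fun q hq => by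
    obtain ⟨u, -, rfl⟩ := subset_map_iff.1 (Q.le hq)
    rw [preimage_map]
  refine ⟨⟨Q.parts.image (preimage · f f.injective.injOn), ?_, ?_, ?_⟩, ?_⟩
  · rw [supIndep_iff_pairwiseDisjoint, coe_image,
      (Set.LeftInvOn.injOn (f₁' := Finset.map f) hpre).pairwiseDisjoint_image]
    exact Q.pairwiseDisjoint_apply
      (fun _ _ => preimage_inter f.injective.injOn f.injective.injOn) preimage_empty
  · rw [sup_image, Function.id_comp,
      Q.sup_parts_apply (fun _ _ => preimage_union _) preimage_empty, preimage_map]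
  · intro h
    obtain ⟨q, hq, hq0⟩ := mem_image.1 h
    exact Q.ne_empty hq ((hpre q hq).symm.trans (map_eq_empty.2 hq0))
  · refine Finpartition.ext ?_
    rw [parts_finsetMap, image_image]
    exact (image_congr hpre).trans image_id

end FinsetMap

end Finpartition

namespace SimpleGraph

open Finpartition

variable {V : Type*} [DecidableEq V] (G : SimpleGraph V)

open Classical in
noncomputable def stableFinpartitions (s : Finset V) : Finset (Finpartition s) :=
  {P | ∀ p ∈ P.parts, G.IsIndepSet (p : Set V)}

open Classical in
/-- The blocks of `Q` into which `v` can be inserted. -/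
noncomputable def freeParts {s : Finset V} (v : V) (Q : Finpartition s) : Finset (Finset V) :=
  {p ∈ Q.parts | ∀ u ∈ p, ¬ G.Adj v u}

variable {G} {s : Finset V} {v : V}

lemma mem_stableFinpartitions {P : Finpartition s} :
    P ∈ G.stableFinpartitions s ↔ ∀ p ∈ P.parts, G.IsIndepSet (p : Set V) := by
  simp [stableFinpartitions]

lemma mem_freeParts {Q : Finpartition s} {p : Finset V} :
    p ∈ G.freeParts v Q ↔ p ∈ Q.parts ∧ ∀ u ∈ p, ¬ G.Adj v u := by
  simp [freeParts]

lemma bot_mem_stableFinpartitions : (⊥ : Finpartition s) ∈ G.stableFinpartitions s := by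
  refine mem_stableFinpartitions.2 fun p hp => ?_
  obtain ⟨x, -, rfl⟩ := mem_bot_iff.1 hp
  simp

lemma freeParts_subset (Q : Finpartition s) : G.freeParts v Q ⊆ Q.parts :=
  fun _ hp => (mem_freeParts.1 hp).1

lemma erase_mem_stableFinpartitions {P : Finpartition s} (hP : P ∈ G.stableFinpartitions s) :
    P.erase v ∈ G.stableFinpartitions (s.erase v) := by
  refine mem_stableFinpartitions.2 fun c hc => ?_
  obtain ⟨d, hd, -, rfl⟩ := mem_erase_parts.1 hc
  exact (mem_stableFinpartitions.1 hP d hd).mono (coe_subset.2 (erase_subset v d))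

lemma insertInto_mem_stableFinpartitions {Q : Finpartition (s.erase v)} (hv : v ∈ s)
    {p : Finset V} (hp : p ∈ insert ∅ Q.parts) (hQ : Q ∈ G.stableFinpartitions (s.erase v))
    (hfree : ∀ u ∈ p, ¬ G.Adj v u) : Q.insertInto hv p hp ∈ G.stableFinpartitions s := by
  rw [mem_stableFinpartitions] at hQ ⊢
  intro q hq
  rcases mem_insert.1 hq with rfl | hq
  · have hp_indep : G.IsIndepSet (p : Set V) := by
      rcases mem_insert.1 hp with rfl | hp
      · simp
      · exact hQ p hp
    rw [coe_insert, isIndepSet_iff, Set.pairwise_insert]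
    exact ⟨hp_indep, fun u hu _ => ⟨hfree u hu, fun h => hfree u hu h.symm⟩⟩
  · exact hQ q (mem_of_mem_erase hq)

lemma erase_part_mem_insert_empty_freeParts {P : Finpartition s}
    (hP : P ∈ G.stableFinpartitions s) :
    (P.part v).erase v ∈ insert ∅ (G.freeParts v (P.erase v)) := by
  rcases mem_insert.1 (P.erase_part_mem_insert_empty_parts v) with h | h
  · exact h ▸ mem_insert_self _ _
  refine mem_insert_of_mem (mem_freeParts.2 ⟨h, fun u hu hadj => ?_⟩)
  obtain ⟨huv, hu⟩ := mem_erase.1 hu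
  have hvs : v ∈ s := P.part_nonempty.1 ⟨u, hu⟩
  exact mem_stableFinpartitions.1 hP _ (P.part_mem.2 hvs) (P.mem_part_self.2 hvs) hu huv.symm hadj

lemma sum_filter_erase_eq {M : Type*} [AddCommMonoid M] {Q : Finpartition (s.erase v)}
    (hv : v ∈ s) (hQ : Q ∈ G.stableFinpartitions (s.erase v)) (g : ℕ → M) :
    ∑ P ∈ (G.stableFinpartitions s).filter (·.erase v = Q), g #P.parts
      = g (#Q.parts + 1) + #(G.freeParts v Q) • g #Q.parts := by
  have hsub : insert ∅ (G.freeParts v Q) ⊆ insert ∅ Q.parts :=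
    insert_subset_insert ∅ (freeParts_subset Q)
  calc ∑ P ∈ (G.stableFinpartitions s).filter (·.erase v = Q), g #P.parts
      = ∑ p ∈ insert ∅ (G.freeParts v Q), g (#Q.parts + if p = ∅ then 1 else 0) := by
        refine (sum_bij' (fun p hp => Q.insertInto hv p (hsub hp)) (fun P _ => (P.part v).erase v)
          (fun p hp => ?_) (fun P hP => ?_) (fun p hp => ?_) (fun P hP => ?_)
          (fun p hp => by rw [card_parts_insertInto])).symm
        · refine mem_filter.2 ⟨insertInto_mem_stableFinpartitions hv _ hQ fun u hu => ?_,
            erase_insertInto⟩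
          rcases mem_insert.1 hp with rfl | hp
          · exact absurd hu (notMem_empty u)
          · exact (mem_freeParts.1 hp).2 u hu
        · obtain ⟨hstable, rfl⟩ := mem_filter.1 hP
          exact erase_part_mem_insert_empty_freeParts hstable
        · rw [part_insertInto, erase_insert (notMem_of_mem_insert_empty_parts (hsub hp))]
        · obtain ⟨-, rfl⟩ := mem_filter.1 hP
          exact insertInto_erase P hv
    _ = g (#Q.parts + 1) + #(G.freeParts v Q) • g #Q.parts := by
        rw [sum_insert fun h => Q.empty_notMem_parts (freeParts_subset Q h), if_pos rfl,
          sum_congr rfl fun p hp => by rw [if_neg (Q.ne_empty (freeParts_subset Q hp)), add_zero],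
          sum_const]

lemma sum_stableFinpartitions_eq_sum_erase {M : Type*} [AddCommMonoid M] (hv : v ∈ s)
    (g : ℕ → M) :
    ∑ P ∈ G.stableFinpartitions s, g #P.parts
      = ∑ Q ∈ G.stableFinpartitions (s.erase v),
          (g (#Q.parts + 1) + #(G.freeParts v Q) • g #Q.parts) := by
  rw [← sum_fiberwise_of_maps_to (g := (·.erase v)) fun P hP => erase_mem_stableFinpartitions hP]
  exact sum_congr rfl fun Q hQ => sum_filter_erase_eq hv hQ g

lemma card_parts_le_card_freeParts_add_degree [Fintype (G.neighborSet v)] (Q : Finpartition s) :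
    #Q.parts ≤ #(G.freeParts v Q) + G.degree v := by
  classical
  rw [← card_filter_add_card_filter_not (fun p => ∀ u ∈ p, ¬ G.Adj v u),
    ← card_neighborFinset_eq_degree]
  refine Nat.add_le_add_left (card_le_card_of_surjOn Q.part fun p hp => ?_) _
  obtain ⟨hp, hadj⟩ := mem_filter.1 hp
  push Not at hadj
  obtain ⟨u, hu, hvu⟩ := hadj
  exact ⟨u, (mem_neighborFinset G v u).2 hvu, Q.part_eq_of_mem hp hu⟩

lemma exists_mem_stableFinpartitions_card_parts_eq_succ {Q : Finpartition s}
    (hQ : Q ∈ G.stableFinpartitions s) (hlt : #Q.parts < #s) :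
    ∃ R ∈ G.stableFinpartitions s, #R.parts = #Q.parts + 1 := by
  obtain ⟨x, hx, y, hy, hxy, hpart⟩ :=
    exists_ne_map_eq_of_card_lt_of_maps_to hlt (f := Q.part) fun x hx => Q.part_mem.2 hx
  have hne : (Q.part x).erase x ≠ ∅ :=
    ne_empty_of_mem (mem_erase.2 ⟨hxy.symm, hpart ▸ Q.mem_part_self.2 hy⟩)
  have hcard := card_parts_insertInto (hv := hx) (hp := Q.erase_part_mem_insert_empty_parts x)
  rw [insertInto_erase, if_neg hne, add_zero] at hcard
  refine ⟨(Q.erase x).insertInto hx ∅ (mem_insert_self _ _),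
    insertInto_mem_stableFinpartitions hx _ (erase_mem_stableFinpartitions hQ) (by simp), ?_⟩
  rw [card_parts_insertInto, if_pos rfl, hcard]

lemma finsetMap_mem_stableFinpartitions_iff {V W : Type*} [DecidableEq V] [DecidableEq W]
    (G : SimpleGraph W) (f : V ↪ W) {s : Finset V} {P : Finpartition s} :
    P.finsetMap f ∈ G.stableFinpartitions (s.map f) ↔
      P ∈ (G.comap f).stableFinpartitions s := by
  simp only [mem_stableFinpartitions, parts_finsetMap, forall_mem_image, coe_map, isIndepSet_iff,
    f.injective.injOn.pairwise_image]
  rfl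

lemma sum_stableFinpartitions_comap {V W M : Type*} [DecidableEq V] [DecidableEq W]
    [AddCommMonoid M] (G : SimpleGraph W) (f : V ↪ W) (s : Finset V) (g : ℕ → M) :
    ∑ P ∈ (G.comap f).stableFinpartitions s, g #P.parts
      = ∑ Q ∈ G.stableFinpartitions (s.map f), g #Q.parts := by
  refine sum_bij (fun P _ => P.finsetMap f)
    (fun P hP => (finsetMap_mem_stableFinpartitions_iff G f).2 hP)
    (fun _ _ _ _ h => finsetMap_injective f h) (fun Q hQ => ?_)
    (fun P _ => by rw [card_parts_finsetMap])
  obtain ⟨P, rfl⟩ := finsetMap_surjective f Q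
  exact ⟨P, (finsetMap_mem_stableFinpartitions_iff G f).1 hQ, rfl⟩

end SimpleGraph

open SimpleGraph Finpartition

section Colorings

variable {V : Type*} [Fintype V] [DecidableEq V] (G : SimpleGraph V)

lemma isStablePartition_iff {P : Finpartition (univ : Finset V)} :
    IsStablePartition G P ↔ P ∈ G.stableFinpartitions univ := by
  rw [mem_stableFinpartitions]
  refine forall₂_congr fun p _ => ⟨fun h u hu w hw _ => h u hu w hw, fun h u hu w hw => ?_⟩
  rcases eq_or_ne u w with rfl | huw
  · exact G.loopless.irrefl u
  · exact h hu hw huw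

lemma sum_range_mul_colS (g : ℕ → ℕ) :
    ∑ k ∈ range (Fintype.card V + 1), g k * colS G k
      = ∑ P ∈ G.stableFinpartitions univ, g #P.parts := by
  have hcolS : ∀ k, colS G k = #{P ∈ G.stableFinpartitions univ | #P.parts = k} := fun k => by
    rw [colS, ← Set.ncard_coe_finset]
    congr
    ext P
    simp [isStablePartition_iff]
  rw [← sum_fiberwise_of_maps_to (s := G.stableFinpartitions univ) (g := (#·.parts))
    (t := range (Fintype.card V + 1))
    fun P _ => mem_range.2 (Nat.lt_succ_of_le (card_univ (α := V) ▸ P.card_parts_le_card))]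
  refine sum_congr rfl fun k _ => ?_
  rw [hcolS, sum_congr rfl fun P hP => by rw [(mem_filter.1 hP).2], sum_const, smul_eq_mul,
    mul_comm]

lemma colB_eq_card : colB G = #(G.stableFinpartitions univ) := by
  simpa [colB] using sum_range_mul_colS G 1

lemma colT_eq_sum : colT G = ∑ P ∈ G.stableFinpartitions univ, #P.parts :=
  sum_range_mul_colS G id

lemma sum_stableFinpartitions_deleteVertex {M : Type*} [AddCommMonoid M] (v : V) (g : ℕ → M) :
    ∑ P ∈ (deleteVertex G v).stableFinpartitions univ, g #P.parts
      = ∑ Q ∈ G.stableFinpartitions (univ.erase v), g #Q.parts := by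
  have huniv : (univ : Finset {x // x ≠ v}).map (Function.Embedding.subtype _) = univ.erase v :=
    by ext; simp
  rw [deleteVertex, induce, sum_stableFinpartitions_comap]
  exact congrArg (fun t => ∑ Q ∈ G.stableFinpartitions t, g #Q.parts) huniv

lemma colB_deleteVertex (v : V) :
    colB (deleteVertex G v) = #(G.stableFinpartitions (univ.erase v)) := by
  rw [colB_eq_card, card_eq_sum_ones, sum_stableFinpartitions_deleteVertex G v fun _ => 1,
    card_eq_sum_ones]

lemma colT_deleteVertex (v : V) :
    colT (deleteVertex G v) = ∑ Q ∈ G.stableFinpartitions (univ.erase v), #Q.parts := by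
  rw [colT_eq_sum]
  exact sum_stableFinpartitions_deleteVertex G v id

lemma colB_eq_sum_erase (v : V) :
    colB G = ∑ Q ∈ G.stableFinpartitions (univ.erase v), (1 + #(G.freeParts v Q)) := by
  rw [colB_eq_card, card_eq_sum_ones]
  exact (sum_stableFinpartitions_eq_sum_erase (mem_univ v) fun _ => 1).trans
    (by simp only [smul_eq_mul, mul_one])

lemma colT_eq_sum_erase (v : V) :
    colT G = ∑ Q ∈ G.stableFinpartitions (univ.erase v),
      (#Q.parts + 1 + #(G.freeParts v Q) * #Q.parts) := by
  rw [colT_eq_sum]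
  exact (sum_stableFinpartitions_eq_sum_erase (mem_univ v) id).trans
    (by simp only [id, smul_eq_mul])

end Colorings

section Inequality

variable {ι R : Type*} [CommRing R] [LinearOrder R] [IsStrictOrderedRing R] {s : Finset ι}

lemma Finset.sum_sum_eq_of_add_swap {F H : ι → ι → R}
    (h : ∀ i j, F i j + F j i = H i j + H j i) :
    ∑ i ∈ s, ∑ j ∈ s, F i j = ∑ i ∈ s, ∑ j ∈ s, H i j := by
  have hswap : ∀ K : ι → ι → R,
      2 * ∑ i ∈ s, ∑ j ∈ s, K i j = ∑ i ∈ s, ∑ j ∈ s, (K i j + K j i) := fun K => by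
    rw [two_mul]
    nth_rw 2 [sum_comm]
    simp only [sum_add_distrib]
  have h2 := (hswap F).trans ((sum_congr rfl fun i _ => sum_congr rfl fun j _ => h i j).trans
    (hswap H).symm)
  linarith

lemma eight_mul_sum_mul_card_sub (k a : ι → R) :
    8 * ((∑ i ∈ s, (k i + 1 + a i * k i)) * #s - (∑ i ∈ s, k i) * ∑ i ∈ s, (1 + a i))
      = ∑ i ∈ s, ∑ j ∈ s, (k i + a i - (k j + a j)) ^ 2
        + 2 * (∑ i ∈ s, (2 - (k i - a i))) ^ 2
        + 2 * #s * ∑ i ∈ s, (k i - a i) * (4 - (k i - a i)) := by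
  simp only [cast_card, sq (∑ i ∈ s, _), mul_sum, sum_mul, ← sum_sub_distrib,
    ← sum_add_distrib]
  exact sum_sum_eq_of_add_swap fun i j => by ring

theorem sum_mul_sum_lt_sum_mul_card {k a : ι → R} (hs : s.Nonempty)
    (hak : ∀ i ∈ s, a i ≤ k i) (hka : ∀ i ∈ s, k i ≤ a i + 4)
    (hgap : ∀ i ∈ s, ∀ j ∈ s, k i + 2 ≤ k j → ∃ l ∈ s, k l = k i + 1) :
    (∑ i ∈ s, k i) * ∑ i ∈ s, (1 + a i) < (∑ i ∈ s, (k i + 1 + a i * k i)) * #s := by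
  have hN : (0 : R) < #s := by exact_mod_cast hs.card_pos
  have hD : 0 ≤ ∑ i ∈ s, ∑ j ∈ s, (k i + a i - (k j + a j)) ^ 2 :=
    sum_nonneg fun i _ => sum_nonneg fun j _ => sq_nonneg _
  have hU_terms : ∀ i ∈ s, 0 ≤ (k i - a i) * (4 - (k i - a i)) := fun i hi =>
    mul_nonneg (by linarith [hak i hi]) (by linarith [hka i hi])
  have hU := sum_nonneg hU_terms
  by_contra! hle
  have hid := eight_mul_sum_mul_card_sub (s := s) k a
  have hE := sq_nonneg (∑ i ∈ s, (2 - (k i - a i)))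
  have hNU := mul_nonneg hN.le hU
  have hD0 : ∑ i ∈ s, ∑ j ∈ s, (k i + a i - (k j + a j)) ^ 2 = 0 := by nlinarith
  have hU0 : ∑ i ∈ s, (k i - a i) * (4 - (k i - a i)) = 0 := by nlinarith
  have hE0 : ∑ i ∈ s, (2 - (k i - a i)) = 0 := by nlinarith
  have hb : ∀ i ∈ s, k i - a i = 0 ∨ k i - a i = 4 := fun i hi => by
    have := (sum_eq_zero_iff_of_nonneg hU_terms).1 hU0 i hi
    rcases mul_eq_zero.1 this with h | h
    · exact Or.inl h
    · exact Or.inr (by linarith)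
  have hc : ∀ i ∈ s, ∀ j ∈ s, k i + a i = k j + a j := fun i hi j hj => by
    have := (sum_eq_zero_iff_of_nonneg fun i _ => sum_nonneg fun j _ => sq_nonneg _).1 hD0 i hi
    have := (sum_eq_zero_iff_of_nonneg fun j _ => sq_nonneg _).1 this j hj
    linarith [pow_eq_zero_iff (n := 2) two_ne_zero |>.1 this]
  have hsum : ∑ i ∈ s, (k i - a i) = ∑ i ∈ s, (2 : R) := by
    rw [sum_sub_distrib] at hE0
    linarith
  obtain ⟨i, hi, hbi⟩ := exists_le_of_sum_le hs hsum.le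
  obtain ⟨j, hj, hbj⟩ := exists_le_of_sum_le hs hsum.ge
  have hbi0 : k i - a i = 0 := (hb i hi).resolve_right fun h => by linarith
  have hbj4 : k j - a j = 4 := (hb j hj).resolve_left fun h => by linarith
  obtain ⟨l, hl, hkl⟩ := hgap i hi j hj (by linarith [hc i hi j hj])
  rcases hb l hl with h | h <;> linarith [hc l hl i hi]

end Inequality

theorem stmt5 {V : Type*} [Fintype V] [DecidableEq V] (G : SimpleGraph V) [DecidableRel G.Adj]
    (v : V) (hv : G.degree v ≤ 4) :
    colA G > colA (deleteVertex G v) := by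
  have hne : (G.stableFinpartitions (univ.erase v)).Nonempty :=
    ⟨⊥, bot_mem_stableFinpartitions⟩
  rw [gt_iff_lt, colA, colA, colB_deleteVertex, colT_deleteVertex, colB_eq_sum_erase G v,
    colT_eq_sum_erase G v, div_lt_div_iff₀ (by exact_mod_cast hne.card_pos)
    (Nat.cast_pos.2 (sum_pos (fun _ _ => by omega) hne))]
  push_cast
  refine sum_mul_sum_lt_sum_mul_card hne (fun Q _ => ?_) (fun Q _ => ?_) fun Q hQ R _ hQR => ?_
  · exact_mod_cast card_le_card (freeParts_subset Q)
  · exact_mod_cast (card_parts_le_card_freeParts_add_degree (G := G) (v := v) Q).trans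
      (by omega)
  · have hQR : #Q.parts + 2 ≤ #R.parts := by exact_mod_cast hQR
    obtain ⟨R', hR', hcard⟩ := exists_mem_stableFinpartitions_card_parts_eq_succ hQ
      (by have := R.card_parts_le_card; omega)
    exact ⟨R', hR', by exact_mod_cast hcard⟩
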